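/- Let w : [0, ∞) → ℝ be Borel measurable with −1/c ≤ w(x) ≤ 0 for all x ≥ 0, and set T = (1/λ)(1 + λ/c) + 1/c. Then for every t ≥ 0 and φ ≥ 0, Jw(t, φ) ≥ (φ + 1)t − (1/λ)(1 + λ/c) − 1/c; in particular Jw(t, φ) ≥ 0 whenever t ≥ T, and consequently inf_{t ≥ 0} Jw(t, φ) = inf_{0 ≤ t ≤ T} Jw(t, φ) for every φ ≥ 0. -/

import Mathlib

open MeasureTheory Real

/-- Standard Gaussian density on ℝ. -/
noncomputable def gaussDensity (z : ℝ) : ℝ := Real.exp (-z ^ 2 / 2) / Real.sqrt (2 * Real.pi)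

/-- One-step update of the conditional odds process upon observing a normalized
increment `z` after a waiting time `t`, starting from odds `φ`. -/
noncomputable def jfun (lam alp t φ z : ℝ) : ℝ :=
  Real.exp (alp * z * Real.sqrt t + (lam - alp ^ 2 / 2) * t) * φ +
    ∫ u in (0:ℝ)..t, lam * Real.exp ((lam + alp * z / Real.sqrt t) * u - alp ^ 2 * u ^ 2 / (2 * t))


/-- Deterministic evolution of the odds process between observations. -/
noncomputable def varphi (lam t x : ℝ) : ℝ := Real.exp (lam * t) * (x + 1) - 1

/-- The averaging operator `K`: Gaussian expectation of `w` applied to the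
one-step odds update. -/
noncomputable def Kop (lam alp : ℝ) (w : ℝ → ℝ) (t φ : ℝ) : ℝ :=
  ∫ z : ℝ, w (jfun lam alp t φ z) * gaussDensity z

/-- The jump operator `J`: running cost until the next observation at time `t`,
plus the discounted continuation value after that observation. -/
noncomputable def Jop (lam alp c : ℝ) (w : ℝ → ℝ) (t φ : ℝ) : ℝ :=
  (∫ u in (0:ℝ)..t, Real.exp (-(lam * u)) * (varphi lam u φ - lam / c)) +
    (if 0 < t then Real.exp (-(lam * t)) * Kop lam alp w t φ else 0)

/-- The optimized jump operator `J₀ w(φ) = inf_{t ≥ 0} J w(t, φ)`. -/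
noncomputable def J0op (lam alp c : ℝ) (w : ℝ → ℝ) (φ : ℝ) : ℝ :=
  ⨅ t : Set.Ici (0:ℝ), Jop lam alp c w t φ

/-
The running cost integrates in closed form to `(φ + 1) t − (1 + λ/c)(1 − e^{−λt})/λ`, which is at
least `(φ + 1) t − (1 + λ/c)/λ`, while the continuation term `e^{−λt} K w` is an average of values of
`w` against a probability density, discounted by a factor in `(0, 1]`, hence at least `−1/c`.
Past `T` the lower bound is nonnegative, i.e. at least `J w(0, φ) = 0`, so larger `t` never improve
the infimum.
-/

open Set ProbabilityTheory

lemma gaussDensity_eq_gaussianPDFReal : gaussDensity = gaussianPDFReal 0 1 := by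
  ext z
  simp [gaussDensity, gaussianPDFReal, div_eq_inv_mul]

lemma le_integral_mul_of_le {α : Type*} [MeasurableSpace α] {μ : Measure α} {f g : α → ℝ}
    {a : ℝ} (ha : a ≤ 0) (hf : ∀ x, a ≤ f x) (hg0 : ∀ x, 0 ≤ g x) (hg : Integrable g μ)
    (hg1 : ∫ x, g x ∂μ = 1) : a ≤ ∫ x, f x * g x ∂μ := by
  by_cases hfg : Integrable (fun x => f x * g x) μ
  · calc a = ∫ x, a * g x ∂μ := by rw [integral_const_mul, hg1, mul_one]
      _ ≤ ∫ x, f x * g x ∂μ :=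
        integral_mono (hg.const_mul a) hfg fun x => mul_le_mul_of_nonneg_right (hf x) (hg0 x)
  · rwa [integral_undef hfg]

lemma jfun_nonneg {lam t φ : ℝ} (alp : ℝ) (hlam : 0 ≤ lam) (ht : 0 ≤ t) (hφ : 0 ≤ φ) (z : ℝ) :
    0 ≤ jfun lam alp t φ z :=
  add_nonneg (mul_nonneg (exp_pos _).le hφ)
    (intervalIntegral.integral_nonneg ht fun _ _ => mul_nonneg hlam (exp_pos _).le)

lemma le_Kop {lam t φ a : ℝ} (alp : ℝ) {w : ℝ → ℝ} (hlam : 0 ≤ lam) (ht : 0 ≤ t) (hφ : 0 ≤ φ)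
    (ha : a ≤ 0) (hw : ∀ x, 0 ≤ x → a ≤ w x) : a ≤ Kop lam alp w t φ := by
  rw [Kop, gaussDensity_eq_gaussianPDFReal]
  exact le_integral_mul_of_le ha (fun z => hw _ (jfun_nonneg alp hlam ht hφ z))
    (gaussianPDFReal_nonneg 0 1) (integrable_gaussianPDFReal 0 1)
    (integral_gaussianPDFReal_eq_one 0 one_ne_zero)

lemma integral_exp_neg_mul {lam : ℝ} (hlam : lam ≠ 0) (t : ℝ) :
    ∫ u in (0:ℝ)..t, exp (-(lam * u)) = (1 - exp (-(lam * t))) / lam := by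
  have := intervalIntegral.integral_comp_mul_left (a := 0) (b := t) exp (neg_ne_zero.2 hlam)
  simp only [neg_mul, mul_zero, integral_exp, exp_zero] at this
  rw [this, smul_eq_mul]
  field_simp
  ring

lemma integral_running_cost {lam : ℝ} (c φ : ℝ) (hlam : lam ≠ 0) (t : ℝ) :
    ∫ u in (0:ℝ)..t, exp (-(lam * u)) * (varphi lam u φ - lam / c)
      = (φ + 1) * t - (1 + lam / c) * ((1 - exp (-(lam * t))) / lam) := by
  have hintegrand : ∀ u, exp (-(lam * u)) * (varphi lam u φ - lam / c)
      = (φ + 1) - (1 + lam / c) * exp (-(lam * u)) := by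
    intro u
    rw [varphi, exp_neg]
    field_simp [exp_ne_zero (lam * u)]
    ring
  simp_rw [hintegrand]
  have hexp : Continuous fun u => (1 + lam / c) * exp (-(lam * u)) := by fun_prop
  rw [intervalIntegral.integral_sub intervalIntegrable_const (hexp.intervalIntegrable 0 t),
    intervalIntegral.integral_const_mul, integral_exp_neg_mul hlam, intervalIntegral.integral_const,
    sub_zero, smul_eq_mul, mul_comm]

lemma le_Jop {lam c t φ a : ℝ} (alp : ℝ) {w : ℝ → ℝ} (hlam : 0 < lam) (hc : 0 < c) (ht : 0 ≤ t)
    (hφ : 0 ≤ φ) (ha : a ≤ 0) (hw : ∀ x, 0 ≤ x → a ≤ w x) :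
    (φ + 1) * t - (1 / lam) * (1 + lam / c) + a ≤ Jop lam alp c w t φ := by
  have hdecay : exp (-(lam * t)) ≤ 1 := exp_le_one_iff.2 (by nlinarith)
  have hrunning : (φ + 1) * t - (1 / lam) * (1 + lam / c)
      ≤ ∫ u in (0:ℝ)..t, exp (-(lam * u)) * (varphi lam u φ - lam / c) := by
    rw [integral_running_cost c φ hlam.ne' t]
    have : (1 - exp (-(lam * t))) / lam ≤ 1 / lam := by gcongr; linarith [exp_pos (-(lam * t))]
    nlinarith [show 0 ≤ 1 + lam / c by positivity]
  have hjump : a ≤ if 0 < t then exp (-(lam * t)) * Kop lam alp w t φ else 0 := by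
    split_ifs
    · calc a ≤ exp (-(lam * t)) * a := by nlinarith
        _ ≤ exp (-(lam * t)) * Kop lam alp w t φ :=
          mul_le_mul_of_nonneg_left (le_Kop alp hlam.le ht hφ ha hw) (exp_pos _).le
    · exact ha
  rw [Jop]
  linarith

lemma ciInf_Ici_eq_ciInf_Icc {α : Type*} [ConditionallyCompleteLinearOrder α] {f : ℝ → α}
    {a T : ℝ} (haT : a ≤ T) (hbdd : BddBelow (f '' Ici a)) (hf : ∀ t, T ≤ t → f a ≤ f t) :
    ⨅ t : Ici a, f t = ⨅ t : Icc a T, f t := by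
  have hbddIci : BddBelow (range fun t : Ici a => f t) := by
    refine hbdd.mono ?_
    rintro _ ⟨⟨t, ht⟩, rfl⟩
    exact mem_image_of_mem f ht
  have hbddIcc : BddBelow (range fun t : Icc a T => f t) := by
    refine hbdd.mono ?_
    rintro _ ⟨⟨t, ht, -⟩, rfl⟩
    exact mem_image_of_mem f ht
  have : Nonempty (Icc a T) := ⟨⟨a, left_mem_Icc.2 haT⟩⟩
  refine le_antisymm (le_ciInf fun ⟨t, hat, _⟩ => ciInf_le hbddIci ⟨t, hat⟩)
    (le_ciInf fun ⟨t, hat⟩ => ?_)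
  rcases le_or_gt t T with htT | hTt
  · exact ciInf_le hbddIcc ⟨t, hat, htT⟩
  · exact (ciInf_le hbddIcc ⟨a, le_rfl, haT⟩).trans (hf t hTt.le)

theorem Jop_lower_bound_and_inf_restrict_general (lam alp c : ℝ)
    (hlam : 0 < lam) (hc : 0 < c)
    (w : ℝ → ℝ)
    (hwl : ∀ x : ℝ, 0 ≤ x → -1 / c ≤ w x) :
    (∀ t : ℝ, 0 ≤ t → ∀ φ : ℝ, 0 ≤ φ →
        (φ + 1) * t - (1 / lam) * (1 + lam / c) - 1 / c ≤ Jop lam alp c w t φ) ∧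
    (∀ t : ℝ, (1 / lam) * (1 + lam / c) + 1 / c ≤ t → ∀ φ : ℝ, 0 ≤ φ →
        0 ≤ Jop lam alp c w t φ) ∧
    (∀ φ : ℝ, 0 ≤ φ →
        J0op lam alp c w φ =
          ⨅ t : Set.Icc (0:ℝ) ((1 / lam) * (1 + lam / c) + 1 / c), Jop lam alp c w t φ) := by
  have lower : ∀ t, 0 ≤ t → ∀ φ, 0 ≤ φ →
      (φ + 1) * t - (1 / lam) * (1 + lam / c) - 1 / c ≤ Jop lam alp c w t φ := fun t ht φ hφ => by
    have hwl_nonpos : -1 / c ≤ 0 := div_nonpos_of_nonpos_of_nonneg (by norm_num) hc.le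
    simpa [sub_eq_add_neg, neg_div] using le_Jop alp hlam hc ht hφ hwl_nonpos hwl
  set T := (1 / lam) * (1 + lam / c) + 1 / c with hT_def
  have hT : 0 ≤ T := by positivity
  have nonneg : ∀ t, T ≤ t → ∀ φ, 0 ≤ φ → 0 ≤ Jop lam alp c w t φ := fun t hTt φ hφ => by
    nlinarith [lower t (hT.trans hTt) φ hφ]
  refine ⟨lower, nonneg, fun φ hφ => ?_⟩
  rw [J0op]
  refine ciInf_Ici_eq_ciInf_Icc (f := fun t => Jop lam alp c w t φ) hT ⟨-T, ?_⟩ fun t hTt => ?_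
  · rintro _ ⟨t, ht, rfl⟩
    nlinarith [lower t ht φ hφ, mul_nonneg (by linarith : 0 ≤ φ + 1) (mem_Ici.1 ht)]
  · simpa [Jop] using nonneg t hTt φ hφ

/-- With `T = (1/λ)(1 + λ/c) + 1/c`: for `w` valued in `[−1/c, 0]` on `[0, ∞)`,
`J w(t, φ) ≥ (φ + 1)t − (1/λ)(1 + λ/c) − 1/c`; in particular `J w(t, φ) ≥ 0` for
`t ≥ T`, and the infimum defining `J₀w` may be restricted to `[0, T]`. -/
theorem Jop_lower_bound_and_inf_restrict (lam alp c : ℝ)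
    (hlam : 0 < lam) (halp : 0 < alp) (hc : 0 < c)
    (w : ℝ → ℝ) (hw : Measurable w)
    (hwl : ∀ x : ℝ, 0 ≤ x → -1 / c ≤ w x) (hwu : ∀ x : ℝ, 0 ≤ x → w x ≤ 0) :
    (∀ t : ℝ, 0 ≤ t → ∀ φ : ℝ, 0 ≤ φ →
        (φ + 1) * t - (1 / lam) * (1 + lam / c) - 1 / c ≤ Jop lam alp c w t φ) ∧
    (∀ t : ℝ, (1 / lam) * (1 + lam / c) + 1 / c ≤ t → ∀ φ : ℝ, 0 ≤ φ →
        0 ≤ Jop lam alp c w t φ) ∧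
    (∀ φ : ℝ, 0 ≤ φ →
        J0op lam alp c w φ =
          ⨅ t : Set.Icc (0:ℝ) ((1 / lam) * (1 + lam / c) + 1 / c), Jop lam alp c w t φ) :=
  Jop_lower_bound_and_inf_restrict_general lam alp c hlam hc w hwl
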